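/- Let μ > 0 and λ be real constants with λ + 2μ > 0, let ω > 0, and set k_p := ω/√(λ+2μ) and k_s := ω/√μ. Let U ⊆ ℝ² be open and let u : U → ℂ² be smooth with μΔu + (λ+μ)∇(div u) + ω²u = 0 on U. Then the compressional part u_p := −(1/k_p²) ∇(div u) satisfies the vector Helmholtz equation Δu_p + k_p² u_p = 0 on U and is curl-free: curl⃗ u_p := ∂₂(u_p)₁ − ∂₁(u_p)₂ = 0 on U. -/

import Mathlib

noncomputable section

open Complex Real

/-- The Euclidean plane. -/
abbrev E2 : Type := EuclideanSpace ℝ (Fin 2)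

/-- Partial derivative `∂ᵢf` (with `i = 0` corresponding to `∂₁`). -/
noncomputable def pdC (i : Fin 2) (f : E2 → ℂ) (x : E2) : ℂ :=
  fderiv ℝ f x (EuclideanSpace.single i 1)

/-- Laplacian of a scalar function. -/
noncomputable def lapC (f : E2 → ℂ) (x : E2) : ℂ :=
  pdC 0 (pdC 0 f) x + pdC 1 (pdC 1 f) x

/-- Divergence `div u = ∂₁u₁ + ∂₂u₂`. -/
noncomputable def divC (u : E2 → Fin 2 → ℂ) (x : E2) : ℂ :=
  pdC 0 (fun y => u y 0) x + pdC 1 (fun y => u y 1) x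

/-- Scalar curl `curl⃗ u = ∂₂u₁ − ∂₁u₂`. -/
noncomputable def curlVecC (u : E2 → Fin 2 → ℂ) (x : E2) : ℂ :=
  pdC 1 (fun y => u y 0) x - pdC 0 (fun y => u y 1) x

/-- Vector curl of a scalar function: `curl f = (−∂₂f, ∂₁f)`. -/
noncomputable def curlScalC (f : E2 → ℂ) (x : E2) : Fin 2 → ℂ :=
  ![-pdC 1 f x, pdC 0 f x]

/-- The Navier operator `𝓛_ω u = μΔu + (λ+μ)∇(div u) + ω²u`, `i`-th component. -/
noncomputable def navier (μ lam ω : ℝ) (u : E2 → Fin 2 → ℂ) (x : E2) (i : Fin 2) : ℂ :=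
  (μ : ℂ) * lapC (fun y => u y i) x + ((lam : ℂ) + (μ : ℂ)) * pdC i (divC u) x
    + (ω : ℂ) ^ 2 * u x i

open ContDiff in
lemma pdC_contDiffAt {f : E2 → ℂ} {x : E2} (hf : ContDiffAt ℝ ∞ f x) (i : Fin 2) :
    ContDiffAt ℝ ∞ (pdC i f) x := by
  have h1 : ContDiffAt ℝ ∞ (fderiv ℝ f) x := hf.fderiv_right le_rfl
  exact ((ContinuousLinearMap.apply ℝ ℂ (EuclideanSpace.single i 1)).contDiff.contDiffAt).comp x h1

open ContDiff in
lemma contDiffAt_diffAt {f : E2 → ℂ} {x : E2} (hf : ContDiffAt ℝ ∞ f x) :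
    DifferentiableAt ℝ f x := hf.differentiableAt (by norm_cast)

lemma pdC_congr {f g : E2 → ℂ} {x : E2} (h : f =ᶠ[nhds x] g) (i : Fin 2) :
    pdC i f x = pdC i g x := by
  unfold pdC; rw [Filter.EventuallyEq.fderiv_eq h]

lemma pdC_congr_on {U : Set E2} (hU : IsOpen U) {x : E2} (hx : x ∈ U) {f g : E2 → ℂ}
    (h : ∀ y ∈ U, f y = g y) (i : Fin 2) : pdC i f x = pdC i g x :=
  pdC_congr (Filter.eventuallyEq_of_mem (hU.mem_nhds hx) h) i

lemma pdC_const (c : ℂ) (x : E2) (i : Fin 2) : pdC i (fun _ => c) x = 0 := by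
  unfold pdC; simp

lemma pdC_add {f g : E2 → ℂ} {x : E2} (hf : DifferentiableAt ℝ f x)
    (hg : DifferentiableAt ℝ g x) (i : Fin 2) :
    pdC i (fun y => f y + g y) x = pdC i f x + pdC i g x := by
  unfold pdC; rw [fderiv_fun_add hf hg]; simp

lemma pdC_const_mul {f : E2 → ℂ} {x : E2} (hf : DifferentiableAt ℝ f x) (c : ℂ) (i : Fin 2) :
    pdC i (fun y => c * f y) x = c * pdC i f x := by
  unfold pdC; rw [fderiv_const_mul hf c]; simp

open ContDiff in
lemma pdC_comm {f : E2 → ℂ} {x : E2} (hf : ContDiffAt ℝ ∞ f x) (i j : Fin 2) :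
    pdC i (pdC j f) x = pdC j (pdC i f) x := by
  have hsymm : IsSymmSndFDerivAt ℝ f x := hf.isSymmSndFDerivAt (by simp only [minSmoothness_of_isRCLikeNormedField]; exact WithTop.coe_le_coe.mpr le_top)
  have hdiff : DifferentiableAt ℝ (fderiv ℝ f) x :=
    (hf.fderiv_right (m := ∞) le_rfl).differentiableAt (by norm_cast)
  have key : ∀ v w : E2, fderiv ℝ (fun y => fderiv ℝ f y w) x v = fderiv ℝ (fderiv ℝ f) x v w := by
    intro v w
    rw [show (fun y => fderiv ℝ f y w) = fun y => (fderiv ℝ f y) ((fun _ => w) y) from rfl,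
      fderiv_clm_apply hdiff (differentiableAt_const w)]
    simp
  show fderiv ℝ (fun y => fderiv ℝ f y _) x _ = fderiv ℝ (fun y => fderiv ℝ f y _) x _
  rw [key, key]
  exact hsymm _ _

open ContDiff in
lemma pdC_swap3 {U : Set E2} (hU : IsOpen U) {f : E2 → ℂ}
    (hf : ∀ y ∈ U, ContDiffAt ℝ ∞ f y) {x : E2} (hx : x ∈ U) (i j k : Fin 2) :
    pdC i (pdC j (pdC k f)) x = pdC j (pdC k (pdC i f)) x := by
  rw [pdC_comm (pdC_contDiffAt (hf x hx) k) i j]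
  exact pdC_congr_on hU hx (fun y hy => pdC_comm (hf y hy) i k) j

open ContDiff in
lemma lapC_contDiffAt {f : E2 → ℂ} {x : E2} (hf : ContDiffAt ℝ ∞ f x) :
    ContDiffAt ℝ ∞ (lapC f) x :=
  (pdC_contDiffAt (pdC_contDiffAt hf 0) 0).add (pdC_contDiffAt (pdC_contDiffAt hf 1) 1)

/-- The compressional part `u_p = −(1/k_p²) ∇(div u)` of a smooth solution of the Navier
equation satisfies the vector Helmholtz equation `Δu_p + k_p² u_p = 0` on `U` and is
curl-free: `curl⃗ u_p = 0` on `U`. -/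
theorem compressional_part_helmholtz_and_curlfree
    (μ lam ω : ℝ) (hμ : 0 < μ) (hlam : 0 < lam + 2 * μ) (hω : 0 < ω)
    (kp ks : ℝ)
    (hkp : kp = ω / Real.sqrt (lam + 2 * μ)) (hks : ks = ω / Real.sqrt μ)
    (U : Set E2) (hU : IsOpen U)
    (u : E2 → Fin 2 → ℂ) (hu : ContDiffOn ℝ (⊤ : ℕ∞) u U)
    (hnavier : ∀ x ∈ U, ∀ i : Fin 2, navier μ lam ω u x i = 0)
    (up : E2 → Fin 2 → ℂ)
    (hup : ∀ (x : E2) (i : Fin 2), up x i = -(1 / (kp : ℂ) ^ 2) * pdC i (divC u) x) :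
    (∀ x ∈ U, ∀ i : Fin 2,
        lapC (fun y => up y i) x + (kp : ℂ) ^ 2 * up x i = 0) ∧
      (∀ x ∈ U, curlVecC up x = 0) := by
  set c : ℂ := -(1 / (kp : ℂ) ^ 2) with hc
  -- smoothness of components
  have hsm : ∀ (i : Fin 2), ∀ x ∈ U, ContDiffAt ℝ ((⊤ : ℕ∞) : WithTop ℕ∞) (fun y => u y i) x := by
    intro i x hx
    have h0 : ContDiffAt ℝ ((⊤ : ℕ∞) : WithTop ℕ∞) u x := (hu.contDiffAt (hU.mem_nhds hx)).of_le (by simp)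
    exact ((ContinuousLinearMap.proj (R := ℝ) (φ := fun _ : Fin 2 => ℂ)
      i).contDiff.contDiffAt).comp x h0
  have hφ : ∀ x ∈ U, ContDiffAt ℝ ((⊤ : ℕ∞) : WithTop ℕ∞) (divC u) x := by
    intro x hx
    exact (pdC_contDiffAt (hsm 0 x hx) 0).add (pdC_contDiffAt (hsm 1 x hx) 1)
  have D3 : ∀ (g : E2 → ℂ), (∀ y ∈ U, ContDiffAt ℝ ((⊤ : ℕ∞) : WithTop ℕ∞) g y) → ∀ (a b : Fin 2), ∀ y ∈ U,
      DifferentiableAt ℝ (pdC a (pdC b g)) y :=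
    fun g hg a b y hy => contDiffAt_diffAt (pdC_contDiffAt (pdC_contDiffAt (hg y hy) b) a)
  have hkp2 : (kp : ℂ) ^ 2 * ((lam : ℂ) + 2 * (μ : ℂ)) = (ω : ℂ) ^ 2 := by
    have hr : kp ^ 2 * (lam + 2 * μ) = ω ^ 2 := by
      rw [hkp, div_pow, Real.sq_sqrt hlam.le, div_mul_cancel₀ _ hlam.ne']
    calc (kp : ℂ) ^ 2 * ((lam : ℂ) + 2 * (μ : ℂ)) = ((kp ^ 2 * (lam + 2 * μ) : ℝ) : ℂ) := by
          push_cast; ring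
      _ = (ω : ℂ) ^ 2 := by rw [hr]; push_cast; ring
  -- derivative of the Navier identity
  have hD : ∀ i : Fin 2, ∀ x ∈ U,
      (μ : ℂ) * pdC i (lapC (fun z => u z i)) x
        + ((lam : ℂ) + (μ : ℂ)) * pdC i (pdC i (divC u)) x
        + (ω : ℂ) ^ 2 * pdC i (fun z => u z i) x = 0 := by
    intro i x hx
    have hA : DifferentiableAt ℝ (lapC (fun z => u z i)) x :=
      contDiffAt_diffAt (lapC_contDiffAt (hsm i x hx))
    have hB : DifferentiableAt ℝ (pdC i (divC u)) x :=
      contDiffAt_diffAt (pdC_contDiffAt (hφ x hx) i)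
    have hC : DifferentiableAt ℝ (fun z => u z i) x := contDiffAt_diffAt (hsm i x hx)
    have h0 : pdC i (fun y => navier μ lam ω u y i) x = 0 := by
      rw [pdC_congr_on hU hx (fun y hy => hnavier y hy i) i]
      exact pdC_const 0 x i
    have expand : pdC i (fun y => navier μ lam ω u y i) x
        = (μ : ℂ) * pdC i (lapC (fun z => u z i)) x
          + ((lam : ℂ) + (μ : ℂ)) * pdC i (pdC i (divC u)) x
          + (ω : ℂ) ^ 2 * pdC i (fun z => u z i) x := by
      unfold navier
      rw [pdC_add ((hA.const_mul _).fun_add (hB.const_mul _)) (hC.const_mul _),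
        pdC_add (hA.const_mul _) (hB.const_mul _), pdC_const_mul hA, pdC_const_mul hB,
        pdC_const_mul hC]
    rw [← expand]; exact h0
  -- expansion of derivatives of the divergence
  have hdiv_exp : ∀ j : Fin 2, ∀ y ∈ U, pdC j (divC u) y
      = pdC j (pdC 0 (fun z => u z 0)) y + pdC j (pdC 1 (fun z => u z 1)) y := by
    intro j y hy
    exact pdC_add (contDiffAt_diffAt (pdC_contDiffAt (hsm 0 y hy) 0))
      (contDiffAt_diffAt (pdC_contDiffAt (hsm 1 y hy) 1)) j
  -- the scalar Helmholtz equation for div u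
  have key : ∀ x ∈ U, ((lam : ℂ) + 2 * (μ : ℂ)) * lapC (divC u) x
      + (ω : ℂ) ^ 2 * divC u x = 0 := by
    intro x hx
    have h0 := hD 0 x hx
    have h1 := hD 1 x hx
    have E00 : pdC 0 (pdC 0 (divC u)) x
        = pdC 0 (pdC 0 (pdC 0 (fun z => u z 0))) x
          + pdC 0 (pdC 0 (pdC 1 (fun z => u z 1))) x := by
      rw [pdC_congr_on hU hx (hdiv_exp 0) 0]
      exact pdC_add (D3 _ (hsm 0) 0 0 x hx) (D3 _ (hsm 1) 0 1 x hx) 0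
    have E11 : pdC 1 (pdC 1 (divC u)) x
        = pdC 1 (pdC 1 (pdC 0 (fun z => u z 0))) x
          + pdC 1 (pdC 1 (pdC 1 (fun z => u z 1))) x := by
      rw [pdC_congr_on hU hx (hdiv_exp 1) 1]
      exact pdC_add (D3 _ (hsm 0) 1 0 x hx) (D3 _ (hsm 1) 1 1 x hx) 1
    have F0 : pdC 0 (lapC (fun z => u z 0)) x
        = pdC 0 (pdC 0 (pdC 0 (fun z => u z 0))) x
          + pdC 0 (pdC 1 (pdC 1 (fun z => u z 0))) x :=
      pdC_add (D3 _ (hsm 0) 0 0 x hx) (D3 _ (hsm 0) 1 1 x hx) 0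
    have F1 : pdC 1 (lapC (fun z => u z 1)) x
        = pdC 1 (pdC 0 (pdC 0 (fun z => u z 1))) x
          + pdC 1 (pdC 1 (pdC 1 (fun z => u z 1))) x :=
      pdC_add (D3 _ (hsm 1) 0 0 x hx) (D3 _ (hsm 1) 1 1 x hx) 1
    have S0 : pdC 0 (pdC 1 (pdC 1 (fun z => u z 0))) x
        = pdC 1 (pdC 1 (pdC 0 (fun z => u z 0))) x := pdC_swap3 hU (hsm 0) hx 0 1 1
    have S1 : pdC 1 (pdC 0 (pdC 0 (fun z => u z 1))) x
        = pdC 0 (pdC 0 (pdC 1 (fun z => u z 1))) x := pdC_swap3 hU (hsm 1) hx 1 0 0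
    have hlapdiv : lapC (divC u) x = pdC 0 (pdC 0 (divC u)) x + pdC 1 (pdC 1 (divC u)) x := rfl
    have hdiv : divC u x = pdC 0 (fun z => u z 0) x + pdC 1 (fun z => u z 1) x := rfl
    rw [hlapdiv, E00, E11, hdiv]
    rw [F0, S0, E00] at h0
    rw [F1, S1, E11] at h1
    linear_combination h0 + h1
  have hne : ((lam : ℂ) + 2 * (μ : ℂ)) ≠ 0 := by
    have h : ((lam + 2 * μ : ℝ) : ℂ) ≠ 0 := Complex.ofReal_ne_zero.mpr hlam.ne'
    push_cast at h; exact h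
  have hHelm : ∀ y ∈ U, lapC (divC u) y = -((kp : ℂ) ^ 2) * divC u y := by
    intro y hy
    have hk := key y hy
    have h2 : ((lam : ℂ) + 2 * (μ : ℂ)) * (lapC (divC u) y + (kp : ℂ) ^ 2 * divC u y) = 0 := by
      linear_combination hk + (divC u y) * hkp2
    have h3 := (mul_eq_zero.1 h2).resolve_left hne
    linear_combination h3
  have hupf : ∀ j : Fin 2, (fun y => up y j) = fun y => c * pdC j (divC u) y :=
    fun j => funext fun y => hup y j
  constructor
  · intro x hx i
    rw [hupf i, hup x i]
    have s1 : ∀ j : Fin 2, ∀ y ∈ U, pdC j (fun z => c * pdC i (divC u) z) y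
        = c * pdC j (pdC i (divC u)) y :=
      fun j y hy => pdC_const_mul (contDiffAt_diffAt (pdC_contDiffAt (hφ y hy) i)) c j
    have L0 : pdC 0 (pdC 0 (fun z => c * pdC i (divC u) z)) x
        = c * pdC i (pdC 0 (pdC 0 (divC u))) x := by
      rw [pdC_congr_on hU hx (s1 0) 0, pdC_const_mul (D3 _ hφ 0 i x hx) c 0,
        pdC_swap3 hU hφ hx 0 0 i, pdC_swap3 hU hφ hx 0 i 0]
    have L1 : pdC 1 (pdC 1 (fun z => c * pdC i (divC u) z)) x
        = c * pdC i (pdC 1 (pdC 1 (divC u))) x := by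
      rw [pdC_congr_on hU hx (s1 1) 1, pdC_const_mul (D3 _ hφ 1 i x hx) c 1,
        pdC_swap3 hU hφ hx 1 1 i, pdC_swap3 hU hφ hx 1 i 1]
    have hsum : pdC i (lapC (divC u)) x
        = pdC i (pdC 0 (pdC 0 (divC u))) x + pdC i (pdC 1 (pdC 1 (divC u))) x :=
      pdC_add (D3 _ hφ 0 0 x hx) (D3 _ hφ 1 1 x hx) i
    have hval : pdC i (lapC (divC u)) x = -((kp : ℂ) ^ 2) * pdC i (divC u) x := by
      rw [pdC_congr_on hU hx hHelm i,
        pdC_const_mul (contDiffAt_diffAt (hφ x hx)) _ i]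
    have hlap : lapC (fun z => c * pdC i (divC u) z) x
        = pdC 0 (pdC 0 (fun z => c * pdC i (divC u) z)) x
          + pdC 1 (pdC 1 (fun z => c * pdC i (divC u) z)) x := rfl
    rw [hlap, L0, L1]
    have : pdC i (pdC 0 (pdC 0 (divC u))) x + pdC i (pdC 1 (pdC 1 (divC u))) x
        = -((kp : ℂ) ^ 2) * pdC i (divC u) x := by
      rw [← hsum]; exact hval
    linear_combination c * this
  · intro x hx
    have h01 : pdC 1 (fun y => up y 0) x = c * pdC 1 (pdC 0 (divC u)) x := by
      rw [hupf 0, pdC_const_mul (contDiffAt_diffAt (pdC_contDiffAt (hφ x hx) 0)) c 1]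
    have h10 : pdC 0 (fun y => up y 1) x = c * pdC 0 (pdC 1 (divC u)) x := by
      rw [hupf 1, pdC_const_mul (contDiffAt_diffAt (pdC_contDiffAt (hφ x hx) 1)) c 0]
    unfold curlVecC
    rw [h01, h10, pdC_comm (hφ x hx) 1 0]
    ring
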